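/- Let n ≥ 1 and let ζ_{n,1},…,ζ_{n,n} be the zeros of the n-th Legendre polynomial P_n. Then for any convex function f : [-1,1] → ℝ, (1/n) Σ_{i=1}^{n} f(ζ_{n,i}) ≤ (f(1) + f(-1))/2. -/

import Mathlib

/-! Since `(X ^ 2 - 1) ^ n` is even, `P_n` has the parity of `n` and its coefficient of
`X ^ (n - 1)` vanishes, so by Vieta the `n` zeros sum to zero. A convex function on `[-1, 1]` lies
below its chord, `f x ≤ ((1 - x) f (-1) + (1 + x) f 1) / 2`, and averaging this over the zeros
removes the linear term. -/

/-- The Legendre polynomial `P_n`, defined via the Rodrigues formula. -/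
noncomputable def legendrePoly (n : ℕ) : Polynomial ℝ :=
  Polynomial.C (1 / (2 ^ n * n.factorial : ℝ)) *
    Polynomial.derivative^[n] ((Polynomial.X ^ 2 - 1) ^ n)

open Polynomial Finset

namespace Polynomial

variable {R : Type*}

theorem coeff_X_sq_sub_one_pow_eq_zero_of_odd [CommRing R] (n : ℕ) {m : ℕ} (hm : Odd m) :
    ((X ^ 2 - 1 : R[X]) ^ n).coeff m = 0 := by
  have hexpand : (X ^ 2 - 1 : R[X]) ^ n = expand R 2 ((X - 1) ^ n) := by
    rw [map_pow, map_sub, expand_X, map_one]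
  rw [hexpand, coeff_expand two_pos, if_neg (by rwa [← even_iff_two_dvd, Nat.not_even_iff_odd])]

theorem monic_X_sq_sub_one_pow [CommRing R] [Nontrivial R] (n : ℕ) :
    ((X ^ 2 - 1 : R[X]) ^ n).Monic := by
  simpa only [map_one] using (monic_X_pow_sub_C (1 : R) two_ne_zero).pow n

theorem natDegree_X_sq_sub_one_pow [CommRing R] [Nontrivial R] (n : ℕ) :
    ((X ^ 2 - 1 : R[X]) ^ n).natDegree = 2 * n := by
  have hmonic : (X ^ 2 - C 1 : R[X]).Monic := monic_X_pow_sub_C 1 two_ne_zero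
  rw [← map_one C, hmonic.natDegree_pow, natDegree_X_pow_sub_C, mul_comm]

theorem Monic.coeff_iterate_derivative_natDegree_sub [Semiring R] {p : R[X]} (hp : p.Monic)
    {k : ℕ} (hk : k ≤ p.natDegree) :
    (derivative^[k] p).coeff (p.natDegree - k) = p.natDegree.descFactorial k := by
  rw [coeff_iterate_derivative, Nat.sub_add_cancel hk, hp.coeff_natDegree, nsmul_one]

theorem Monic.natDegree_iterate_derivative [Semiring R] [CharZero R] {p : R[X]} (hp : p.Monic)
    {k : ℕ} (hk : k ≤ p.natDegree) :
    (derivative^[k] p).natDegree = p.natDegree - k := by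
  refine (_root_.Polynomial.natDegree_iterate_derivative p k).antisymm (le_natDegree_of_ne_zero ?_)
  rw [hp.coeff_iterate_derivative_natDegree_sub hk, Nat.cast_ne_zero, Ne,
    Nat.descFactorial_eq_zero_iff_lt, not_lt]
  exact hk

section Roots

variable [CommRing R] [IsDomain R] {ι : Type*} [Fintype ι]

theorem roots_eq_map_of_injective {p : R[X]} (hp : p ≠ 0) {ζ : ι → R}
    (hζ : Function.Injective ζ) (hroot : ∀ i, p.eval (ζ i) = 0)
    (hcard : p.natDegree ≤ Fintype.card ι) :
    p.roots = univ.val.map ζ := by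
  have hle : univ.val.map ζ ≤ p.roots := by
    refine (Multiset.le_iff_subset (univ.nodup.map hζ)).2 fun a ha => ?_
    obtain ⟨i, -, rfl⟩ := Multiset.mem_map.1 ha
    exact (mem_roots hp).2 (hroot i)
  refine (Multiset.eq_of_le_of_card_le hle ?_).symm
  simpa using (card_roots' p).trans hcard

theorem nextCoeff_eq_neg_leadingCoeff_mul_sum_of_injective {p : R[X]} (hp : p ≠ 0) {ζ : ι → R}
    (hζ : Function.Injective ζ) (hroot : ∀ i, p.eval (ζ i) = 0)
    (hcard : p.natDegree = Fintype.card ι) :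
    p.nextCoeff = -p.leadingCoeff * ∑ i, ζ i := by
  have hroots := roots_eq_map_of_injective hp hζ hroot hcard.le
  have hsplits : p.Splits := by
    rw [splits_iff_card_roots, hroots, hcard, Multiset.card_map, card_val, card_univ]
  rw [hsplits.nextCoeff_eq_neg_sum_roots_mul_leadingCoeff, hroots, sum_eq_multiset_sum]

end Roots

end Polynomial

theorem legendrePoly_natDegree (n : ℕ) : (legendrePoly n).natDegree = n := by
  have hk : n ≤ ((X ^ 2 - 1 : ℝ[X]) ^ n).natDegree := by
    rw [natDegree_X_sq_sub_one_pow]; omega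
  rw [legendrePoly, natDegree_C_mul (by positivity),
    (monic_X_sq_sub_one_pow n).natDegree_iterate_derivative hk, natDegree_X_sq_sub_one_pow]
  omega

theorem legendrePoly_coeff_eq_zero_of_odd {n m : ℕ} (h : Odd (m + n)) :
    (legendrePoly n).coeff m = 0 := by
  rw [legendrePoly, coeff_C_mul, coeff_iterate_derivative,
    coeff_X_sq_sub_one_pow_eq_zero_of_odd n h, smul_zero, mul_zero]

theorem ConvexOn.le_chord {f : ℝ → ℝ} {a b x : ℝ} (hf : ConvexOn ℝ (Set.Icc a b) f)
    (hab : a < b) (hx : x ∈ Set.Icc a b) :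
    f x ≤ ((b - x) * f a + (x - a) * f b) / (b - a) := by
  have hba : 0 < b - a := sub_pos.2 hab
  have h := hf.2 (Set.left_mem_Icc.2 hab.le) (Set.right_mem_Icc.2 hab.le)
    (div_nonneg (sub_nonneg.2 hx.2) hba.le) (div_nonneg (sub_nonneg.2 hx.1) hba.le)
    (by field_simp; ring)
  have hpoint : ((b - x) / (b - a)) • a + ((x - a) / (b - a)) • b = x := by
    simp only [smul_eq_mul]; field_simp; ring
  rw [hpoint] at h
  simpa only [smul_eq_mul, div_mul_eq_mul_div, ← add_div] using h

theorem ConvexOn.sum_le_chord {ι : Type*} {s : Finset ι} {f : ℝ → ℝ} {a b : ℝ} {x : ι → ℝ}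
    (hf : ConvexOn ℝ (Set.Icc a b) f) (hab : a < b) (hx : ∀ i ∈ s, x i ∈ Set.Icc a b) :
    ∑ i ∈ s, f (x i) ≤
      ((b * #s - ∑ i ∈ s, x i) * f a + (∑ i ∈ s, x i - a * #s) * f b) / (b - a) :=
  calc ∑ i ∈ s, f (x i) ≤ ∑ i ∈ s, ((b - x i) * f a + (x i - a) * f b) / (b - a) :=
        sum_le_sum fun i hi => hf.le_chord hab (hx i hi)
    _ = _ := by
        simp only [← sum_div, sum_add_distrib, ← sum_mul, sum_sub_distrib, sum_const,
          nsmul_eq_mul]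
        ring

theorem legendre_zeros_choquet (n : ℕ) (hn : 1 ≤ n) (ζ : Fin n → ℝ)
    (hζmem : ∀ i, ζ i ∈ Set.Ioo (-1 : ℝ) 1)
    (hζroot : ∀ i, (legendrePoly n).eval (ζ i) = 0)
    (hζinj : Function.Injective ζ)
    (f : ℝ → ℝ) (hf : ConvexOn ℝ (Set.Icc (-1 : ℝ) 1) f) :
    (1 / n) * ∑ i, f (ζ i) ≤ (f 1 + f (-1)) / 2 := by
  have hdeg := legendrePoly_natDegree n
  have hP : legendrePoly n ≠ 0 := ne_zero_of_natDegree_gt (hdeg ▸ hn)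
  have hsum : ∑ i, ζ i = 0 := by
    have hvieta := nextCoeff_eq_neg_leadingCoeff_mul_sum_of_injective hP hζinj hζroot
      (by rw [hdeg, Fintype.card_fin])
    rw [nextCoeff_of_natDegree_pos (by omega), hdeg,
      legendrePoly_coeff_eq_zero_of_odd ⟨n - 1, by omega⟩] at hvieta
    simpa [leadingCoeff_ne_zero.2 hP] using hvieta.symm
  have hchord := hf.sum_le_chord (s := univ) (by norm_num) fun i _ =>
    Set.Ioo_subset_Icc_self (hζmem i)
  have hnpos : (0 : ℝ) < n := by exact_mod_cast hn
  rw [hsum, card_univ, Fintype.card_fin] at hchord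
  rw [one_div, inv_mul_le_iff₀ hnpos]
  linarith
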